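/- (Growth estimate for the Yosida approximation) Let p ∈ (1,∞) with conjugate exponent p'. There exists a constant C > 0 depending only on p with the following property: for every real normed space V, every convex function φ : V → [0,∞] with φ(0) < ∞, every λ > 0, and all u, u_λ ∈ V, ξ ∈ V* such that ξ is a subgradient of w ↦ ‖w‖_V^p/p at (u_λ − u)/λ and −ξ is a subgradient of φ at u_λ, one has ‖(u − u_λ)/λ‖_V^p ≤ (2/λ)φ(0) + C‖u‖_V^p/λ^p; consequently also ‖ξ‖_{V*}^{p'} ≤ (2/λ)φ(0) + C‖u‖_V^p/λ^p. -/

import Mathlib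

open ENNReal

/-- `ξ` is a subgradient of the real-valued convex function `g` at `u`. -/
def HasSubgradientAt {V : Type*} [NormedAddCommGroup V] [NormedSpace ℝ V]
    (g : V → ℝ) (ξ : V →L[ℝ] ℝ) (u : V) : Prop :=
  ∀ v : V, g u + ξ (v - u) ≤ g v

/-- `ξ` is a subgradient of the `[0,∞]`-valued convex function `φ` at `u`. -/
def ESubgradientAt {V : Type*} [NormedAddCommGroup V] [NormedSpace ℝ V]
    (φ : V → ℝ≥0∞) (u : V) (ξ : V →L[ℝ] ℝ) : Prop :=
  φ u ≠ ⊤ ∧ ∀ v : V, φ v ≠ ⊤ → (φ u).toReal + ξ (v - u) ≤ (φ v).toReal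

/-!
Put `w₀ = (u_λ - u) / λ`. Comparing `‖·‖ ^ p / p` with its affine minorant along rays through
`w₀`, a one-sided derivative at the minimum gives `‖ξ‖ ≤ ‖w₀‖ ^ (p - 1)` and `‖w₀‖ ^ p ≤ ξ w₀`.
Testing the subgradient inequality of `φ` at `u_λ` against `0` gives `ξ u_λ ≤ φ 0`, hence
`‖w₀‖ ^ p ≤ ξ w₀ ≤ φ 0 / λ + ‖w₀‖ ^ (p - 1) ‖u‖ / λ`. Either `‖w₀‖ ≤ 2 ‖u‖ / λ`, or the last term
is at most `‖w₀‖ ^ p / 2` and is absorbed; so `C = 2 ^ p` works, and `‖ξ‖ ^ p' ≤ ‖w₀‖ ^ p`.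
-/

open Filter Topology

theorem HasDerivAt.nonneg_of_eventually_le {k : ℝ → ℝ} {d : ℝ} (hk : HasDerivAt k d 0)
    (hmin : ∀ᶠ s in 𝓝[>] 0, k 0 ≤ k s) : 0 ≤ d := by
  refine ge_of_tendsto hk.tendsto_slope_zero_right ?_
  filter_upwards [hmin, self_mem_nhdsWithin] with s hs (hs0 : 0 < s)
  rw [zero_add, smul_eq_mul]
  exact mul_nonneg (inv_nonneg.2 hs0.le) (sub_nonneg.2 hs)

section

variable {V : Type*} [NormedAddCommGroup V] [NormedSpace ℝ V] {p : ℝ} {ξ : V →L[ℝ] ℝ} {w₀ : V}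

theorem HasSubgradientAt.apply_le_of_norm_add_smul_le (hp : 1 ≤ p)
    (hξ : HasSubgradientAt (fun w : V => ‖w‖ ^ p / p) ξ w₀) {v : V} {g : ℝ → ℝ} {g' : ℝ}
    (hg : HasDerivAt g g' 0) (hg0 : g 0 = ‖w₀‖)
    (hle : ∀ᶠ s in 𝓝[>] 0, ‖w₀ + s • v‖ ≤ g s) :
    ξ v ≤ ‖w₀‖ ^ (p - 1) * g' := by
  have hp0 : 0 < p := by linarith
  have hk : HasDerivAt (fun s => g s ^ p / p - s * ξ v) (g' * p * g 0 ^ (p - 1) / p - 1 * ξ v) 0 :=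
    ((hg.rpow_const (Or.inr hp)).div_const p).sub ((hasDerivAt_id 0).mul_const (ξ v))
  have hmin : ∀ᶠ s in 𝓝[>] 0, g 0 ^ p / p - 0 * ξ v ≤ g s ^ p / p - s * ξ v := by
    filter_upwards [hle] with s hs
    have hsub := hξ (w₀ + s • v)
    rw [add_sub_cancel_left, ξ.map_smul, smul_eq_mul] at hsub
    have : ‖w₀ + s • v‖ ^ p ≤ g s ^ p := Real.rpow_le_rpow (norm_nonneg _) hs hp0.le
    rw [hg0, zero_mul, sub_zero]
    linarith [div_le_div_of_nonneg_right this hp0.le]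
  have := hk.nonneg_of_eventually_le hmin
  rw [hg0, mul_comm g', mul_assoc, mul_div_cancel_left₀ _ hp0.ne'] at this
  linarith

theorem HasSubgradientAt.opNorm_le (hp : 1 ≤ p)
    (hξ : HasSubgradientAt (fun w : V => ‖w‖ ^ p / p) ξ w₀) : ‖ξ‖ ≤ ‖w₀‖ ^ (p - 1) := by
  have hbound (v : V) : ξ v ≤ ‖w₀‖ ^ (p - 1) * ‖v‖ := by
    refine hξ.apply_le_of_norm_add_smul_le hp (g := fun s => ‖w₀‖ + s * ‖v‖)
      (by simpa using (hasDerivAt_id (0 : ℝ)).mul_const ‖v‖ |>.const_add ‖w₀‖) (by simp) ?_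
    filter_upwards [self_mem_nhdsWithin] with s (hs : 0 < s)
    calc ‖w₀ + s • v‖ ≤ ‖w₀‖ + ‖s • v‖ := norm_add_le _ _
      _ = ‖w₀‖ + s * ‖v‖ := by rw [norm_smul, Real.norm_of_nonneg hs.le]
  refine ξ.opNorm_le_bound (by positivity) fun v => abs_le.2 ⟨?_, hbound v⟩
  linarith [show -ξ v ≤ _ by simpa using hbound (-v)]

theorem HasSubgradientAt.norm_rpow_le_apply (hp : 1 ≤ p)
    (hξ : HasSubgradientAt (fun w : V => ‖w‖ ^ p / p) ξ w₀) : ‖w₀‖ ^ p ≤ ξ w₀ := by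
  have h := hξ.apply_le_of_norm_add_smul_le hp (v := -w₀) (g := fun s => (1 - s) * ‖w₀‖)
    (by simpa using ((hasDerivAt_id (0 : ℝ)).const_sub 1).mul_const ‖w₀‖) (by simp) ?_
  · rwa [map_neg, mul_neg, neg_le_neg_iff, ← Real.rpow_add_one' (norm_nonneg _) (by linarith),
      sub_add_cancel] at h
  · filter_upwards [Ioo_mem_nhdsGT one_pos] with s hs
    rw [show w₀ + s • -w₀ = (1 - s) • w₀ by module, norm_smul,
      Real.norm_of_nonneg (by linarith [hs.2])]

end

theorem ESubgradientAt.neg_apply_le_toReal_zero {V : Type*} [NormedAddCommGroup V]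
    [NormedSpace ℝ V] {φ : V → ℝ≥0∞} {u : V} {ξ : V →L[ℝ] ℝ} (hξ : ESubgradientAt φ u ξ)
    (h0 : φ 0 ≠ ⊤) : -ξ u ≤ (φ 0).toReal := by
  have := hξ.2 0 h0
  rw [zero_sub, map_neg] at this
  linarith [(φ u).toReal_nonneg]

theorem rpow_le_two_mul_add_two_rpow_mul {p X A B : ℝ} (hp : 0 ≤ p) (hX : 0 ≤ X) (hA : 0 ≤ A)
    (hB : 0 ≤ B) (h : X ^ p ≤ A + X ^ (p - 1) * B) : X ^ p ≤ 2 * A + 2 ^ p * B ^ p := by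
  have hBp : 0 ≤ 2 ^ p * B ^ p := by positivity
  rcases le_or_gt X (2 * B) with hXB | hXB
  · calc X ^ p ≤ (2 * B) ^ p := Real.rpow_le_rpow hX hXB hp
      _ = 2 ^ p * B ^ p := Real.mul_rpow zero_le_two hB
      _ ≤ 2 * A + 2 ^ p * B ^ p := by linarith
  · have hX0 : 0 < X := by linarith
    have hsmall : X ^ (p - 1) * B ≤ X ^ p / 2 := by
      rw [Real.rpow_sub_one hX0.ne', div_mul_eq_mul_div, div_le_div_iff₀ hX0 two_pos]
      have := Real.rpow_nonneg hX p
      nlinarith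
    linarith

theorem yosida_growth_estimate.{v}
    (p : ℝ) (hp : 1 < p) :
    ∃ C : ℝ, 0 < C ∧
      ∀ (V : Type v) (_ : NormedAddCommGroup V) (_ : NormedSpace ℝ V)
        (φ : V → ℝ≥0∞), (∀ u v : V, ∀ a b : ℝ, 0 ≤ a → 0 ≤ b → a + b = 1 →
            φ (a • u + b • v) ≤ ENNReal.ofReal a * φ u + ENNReal.ofReal b * φ v) →
        φ 0 ≠ ⊤ →
        ∀ (lam : ℝ), 0 < lam →
        ∀ (u ulam : V) (ξ : V →L[ℝ] ℝ),
          HasSubgradientAt (fun w : V => ‖w‖ ^ p / p) ξ (lam⁻¹ • (ulam - u)) →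
          ESubgradientAt φ ulam (-ξ) →
          ‖lam⁻¹ • (u - ulam)‖ ^ p ≤ 2 / lam * (φ 0).toReal + C * ‖u‖ ^ p / lam ^ p ∧
          ‖ξ‖ ^ (p / (p - 1)) ≤ 2 / lam * (φ 0).toReal + C * ‖u‖ ^ p / lam ^ p := by
  refine ⟨2 ^ p, by positivity, fun V _ _ φ _ hφ0 lam hlam u ulam ξ hξ hφ => ?_⟩
  set w₀ := lam⁻¹ • (ulam - u)
  have hξnorm := hξ.opNorm_le hp.le
  have hξulam : ξ ulam ≤ (φ 0).toReal := by simpa using hφ.neg_apply_le_toReal_zero hφ0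
  have hbalance : ‖w₀‖ ^ p ≤ (φ 0).toReal / lam + ‖w₀‖ ^ (p - 1) * (‖u‖ / lam) :=
    calc ‖w₀‖ ^ p ≤ ξ w₀ := hξ.norm_rpow_le_apply hp.le
      _ = (ξ ulam + -ξ u) / lam := by simp only [w₀, map_smul, map_sub, smul_eq_mul]; ring
      _ ≤ ((φ 0).toReal + ‖w₀‖ ^ (p - 1) * ‖u‖) / lam := by
          gcongr
          exact (neg_le_abs _).trans ((ξ.le_opNorm u).trans (by gcongr))
      _ = _ := by ring
  have hgrowth : ‖w₀‖ ^ p ≤ 2 / lam * (φ 0).toReal + 2 ^ p * ‖u‖ ^ p / lam ^ p := by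
    have := rpow_le_two_mul_add_two_rpow_mul (by linarith) (norm_nonneg w₀) (by positivity)
      (by positivity) hbalance
    rwa [Real.div_rpow (norm_nonneg u) hlam.le, mul_div_assoc', mul_div_assoc',
      ← div_mul_eq_mul_div] at this
  have hnorm : ‖lam⁻¹ • (u - ulam)‖ = ‖w₀‖ := by rw [← norm_neg, ← smul_neg, neg_sub]
  have hdual : ‖ξ‖ ^ (p / (p - 1)) ≤ ‖w₀‖ ^ p := by
    calc ‖ξ‖ ^ (p / (p - 1)) ≤ (‖w₀‖ ^ (p - 1)) ^ (p / (p - 1)) := by gcongr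
      _ = ‖w₀‖ ^ p := by
          rw [← Real.rpow_mul (norm_nonneg _), mul_div_cancel₀ _ (by linarith)]
  exact ⟨hnorm ▸ hgrowth, hdual.trans hgrowth⟩
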